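/- arXiv:2408.07501 — 8 statements merged into one kernel-verified Lean document; each statement's English description precedes it below -/
import Mathlib

section
/- Let μ_u, μ_v > 0 and fix α > 0. Define λ_A(μ) = (r_u - μ + r_v - αμ + sqrt((r_u - μ - (r_v - αμ))^2 + 4 α μ^2))/2 for μ > 0 (i.e., μ_u = μ, μ_v = αμ). Then λ_A is monotone nonincreasing in μ, λ_A(μ) → max(r_u, r_v) as μ → 0+, and λ_A(μ) → (α r_u + r_v)/(1+α) as μ → +∞. -/
/-- With μ_u = μ, μ_v = αμ, the largest eigenvalue λ_A(μ) of the mutation matrix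
is nonincreasing in μ, tends to max(r_u, r_v) as μ → 0⁺ and to
(α r_u + r_v)/(1+α) as μ → +∞. -/
theorem stmt1 (r_u r_v α : ℝ) (hα : 0 < α) :
    (∀ μ1 μ2 : ℝ, 0 < μ1 → μ1 ≤ μ2 →
      ((r_u - μ2) + (r_v - α * μ2) +
        Real.sqrt (((r_u - μ2) - (r_v - α * μ2)) ^ 2 + 4 * α * μ2 ^ 2)) / 2 ≤
      ((r_u - μ1) + (r_v - α * μ1) +
        Real.sqrt (((r_u - μ1) - (r_v - α * μ1)) ^ 2 + 4 * α * μ1 ^ 2)) / 2) ∧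
    Filter.Tendsto (fun μ : ℝ =>
      ((r_u - μ) + (r_v - α * μ) +
        Real.sqrt (((r_u - μ) - (r_v - α * μ)) ^ 2 + 4 * α * μ ^ 2)) / 2)
      (nhdsWithin 0 (Set.Ioi 0)) (nhds (max r_u r_v)) ∧
    Filter.Tendsto (fun μ : ℝ =>
      ((r_u - μ) + (r_v - α * μ) +
        Real.sqrt (((r_u - μ) - (r_v - α * μ)) ^ 2 + 4 * α * μ ^ 2)) / 2)
      Filter.atTop (nhds ((α * r_u + r_v) / (1 + α))) := by
  have hα1 : (0:ℝ) < 1 + α := by linarith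
  set c := r_u - r_v with hc
  refine ⟨?_, ?_, ?_⟩
  · -- monotone nonincreasing
    intro μ1 μ2 hμ1 hle
    have hd0 : 0 ≤ μ2 - μ1 := by linarith
    set s1 := Real.sqrt (((r_u - μ1) - (r_v - α * μ1)) ^ 2 + 4 * α * μ1 ^ 2) with hs1def
    have hs1nn : 0 ≤ s1 := Real.sqrt_nonneg _
    have hs1sq : s1 ^ 2 = c^2 - 2*c*(1-α)*μ1 + (1+α)^2*μ1^2 := by
      rw [hs1def, Real.sq_sqrt (by positivity), hc]; ring
    have key : (1+α)^2 * μ1 - c * (1-α) ≤ (1+α) * s1 := by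
      by_cases h : (1+α)^2 * μ1 - c * (1-α) ≤ 0
      · exact h.trans (by positivity)
      · push_neg at h
        have hpos : 0 < (1+α)^2 * μ1 - c * (1-α) + (1+α) * s1 := by nlinarith
        nlinarith [mul_nonneg hα.le (sq_nonneg c), hpos, hs1sq]
    have hΔ : ((r_u - μ2) - (r_v - α * μ2)) ^ 2 + 4 * α * μ2 ^ 2 ≤
        (s1 + (1+α) * (μ2 - μ1)) ^ 2 := by
      rw [show ((r_u - μ2) - (r_v - α * μ2)) ^ 2 + 4 * α * μ2 ^ 2
          = c^2 - 2*c*(1-α)*μ2 + (1+α)^2*μ2^2 by rw [hc]; ring]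
      nlinarith [mul_le_mul_of_nonneg_left key hd0, hs1sq]
    have hs2 : Real.sqrt (((r_u - μ2) - (r_v - α * μ2)) ^ 2 + 4 * α * μ2 ^ 2) ≤
        s1 + (1+α) * (μ2 - μ1) := by
      calc Real.sqrt (((r_u - μ2) - (r_v - α * μ2)) ^ 2 + 4 * α * μ2 ^ 2)
          ≤ Real.sqrt ((s1 + (1+α) * (μ2 - μ1)) ^ 2) := Real.sqrt_le_sqrt hΔ
        _ = s1 + (1+α) * (μ2 - μ1) := Real.sqrt_sq (by positivity)
    linarith
  · -- limit at 0⁺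
    have hcont : Continuous (fun μ : ℝ =>
        ((r_u - μ) + (r_v - α * μ) +
          Real.sqrt (((r_u - μ) - (r_v - α * μ)) ^ 2 + 4 * α * μ ^ 2)) / 2) := by
      fun_prop
    have h0 : ((r_u - 0) + (r_v - α * 0) +
        Real.sqrt (((r_u - 0) - (r_v - α * 0)) ^ 2 + 4 * α * 0 ^ 2)) / 2 = max r_u r_v := by
      rw [show ((r_u - 0) - (r_v - α * 0)) ^ 2 + 4 * α * 0 ^ 2 = (r_u - r_v)^2 by ring,
        Real.sqrt_sq_eq_abs]
      rcases le_total r_u r_v with h | h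
      · rw [abs_of_nonpos (by linarith), max_eq_right h]; ring
      · rw [abs_of_nonneg (by linarith), max_eq_left h]; ring
    exact h0 ▸ (hcont.tendsto 0).mono_left nhdsWithin_le_nhds
  · -- limit at +∞
    have hdenpos : ∀ t : ℝ, 0 < Real.sqrt ((c*t - (1-α))^2 + 4*α) + (1+α) := by
      intro t
      have := Real.sqrt_nonneg ((c*t - (1-α))^2 + 4*α)
      linarith
    have hgc : Filter.Tendsto
        (fun t : ℝ => (c^2*t - 2*c*(1-α)) / (Real.sqrt ((c*t - (1-α))^2 + 4*α) + (1+α)))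
        (nhds 0)
        (nhds ((c^2*0 - 2*c*(1-α)) / (Real.sqrt ((c*0 - (1-α))^2 + 4*α) + (1+α)))) := by
      apply ContinuousAt.tendsto
      apply ContinuousAt.div
      · fun_prop
      · fun_prop
      · exact (hdenpos 0).ne'
    have hinv : Filter.Tendsto (fun μ : ℝ => 1/μ) Filter.atTop (nhds 0) := by
      simpa [one_div] using tendsto_inv_atTop_zero (𝕜 := ℝ)
    have htend : Filter.Tendsto
        (fun μ : ℝ => ((r_u + r_v) +
          (c^2*(1/μ) - 2*c*(1-α)) / (Real.sqrt ((c*(1/μ) - (1-α))^2 + 4*α) + (1+α))) / 2)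
        Filter.atTop
        (nhds (((r_u + r_v) +
          (c^2*0 - 2*c*(1-α)) / (Real.sqrt ((c*0 - (1-α))^2 + 4*α) + (1+α))) / 2)) :=
      ((hgc.comp hinv).const_add _).div_const _
    have hval : ((r_u + r_v) +
        (c^2*0 - 2*c*(1-α)) / (Real.sqrt ((c*0 - (1-α))^2 + 4*α) + (1+α))) / 2
          = (α * r_u + r_v) / (1 + α) := by
      rw [show (c*0 - (1-α))^2 + 4*α = (1+α)^2 by ring, Real.sqrt_sq hα1.le]
      rw [hc]
      field_simp
      ring
    rw [← hval]
    apply htend.congr'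
    filter_upwards [Filter.eventually_gt_atTop (0:ℝ)] with μ hμ
    have hμ0 : μ ≠ 0 := hμ.ne'
    have hD : (0:ℝ) ≤ (c*(1/μ) - (1-α))^2 + 4*α := by positivity
    set s := Real.sqrt ((c*(1/μ) - (1-α))^2 + 4*α) with hsdef
    have hs2 : s ^ 2 = (c*(1/μ) - (1-α))^2 + 4*α := Real.sq_sqrt hD
    have hsnn : 0 ≤ s := Real.sqrt_nonneg _
    have hsqrt : Real.sqrt (((r_u - μ) - (r_v - α * μ)) ^ 2 + 4 * α * μ ^ 2) = μ * s := by
      rw [show ((r_u - μ) - (r_v - α * μ)) ^ 2 + 4 * α * μ ^ 2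
          = μ^2 * ((c*(1/μ) - (1-α))^2 + 4*α) by field_simp; ring,
        Real.sqrt_mul (sq_nonneg μ), Real.sqrt_sq hμ.le, hsdef]
    have hden : s + (1+α) ≠ 0 := (hdenpos (1/μ)).ne'
    have hs2' : μ^2 * s^2 = (c - (1-α)*μ)^2 + 4*α*μ^2 := by
      rw [hs2]; field_simp
    have keyq : μ * s - (1+α) * μ = (c^2*(1/μ) - 2*c*(1-α)) / (s + (1+α)) := by
      rw [eq_div_iff hden]
      field_simp
      linear_combination hs2'
    rw [hsqrt]
    rw [← keyq]
    ring
end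

section
/- Let r_u, r_v ∈ ℝ, μ_u, μ_v > 0 and let λ_A be the largest eigenvalue of A = [[r_u - μ_u, μ_v], [μ_u, r_v - μ_v]]. If r_u > 0 and r_v > 0 then λ_A > 0; if r_u < 0 and r_v < 0 then λ_A < 0; and if r_u = r_v = 0 then λ_A = 0. Moreover λ_A is monotone increasing in r_u and in r_v. -/
lemma lam_formula (μ_u μ_v : ℝ) (hμu : 0 < μ_u) (hμv : 0 < μ_v) (r_u r_v L : ℝ)
    (h : IsGreatest {x : ℝ | x ^ 2 - ((r_u - μ_u) + (r_v - μ_v)) * x +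
        ((r_u - μ_u) * (r_v - μ_v) - μ_v * μ_u) = 0} L) :
    L = (((r_u - μ_u) + (r_v - μ_v)) +
      Real.sqrt (((r_u - μ_u) - (r_v - μ_v)) ^ 2 + 4 * μ_u * μ_v)) / 2 := by
  set T := (r_u - μ_u) + (r_v - μ_v) with hT
  set D := (r_u - μ_u) * (r_v - μ_v) - μ_v * μ_u with hD
  set disc := ((r_u - μ_u) - (r_v - μ_v)) ^ 2 + 4 * μ_u * μ_v with hdisc
  have hdpos : 0 < disc := by positivity
  set s := Real.sqrt disc with hs
  have hs0 : 0 ≤ s := Real.sqrt_nonneg _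
  have hs2 : s ^ 2 = T ^ 2 - 4 * D := by
    rw [hs, Real.sq_sqrt hdpos.le]; ring
  have hfac : ∀ x : ℝ, x ^ 2 - T * x + D = (x - (T + s) / 2) * (x - (T - s) / 2) := by
    intro x; linear_combination (1/4 : ℝ) * hs2
  have hmem : (T + s) / 2 ∈ {x : ℝ | x ^ 2 - T * x + D = 0} := by
    simp only [Set.mem_setOf_eq, hfac]; ring
  have hle : (T + s) / 2 ≤ L := h.2 hmem
  have hLmem := h.1
  simp only [Set.mem_setOf_eq, hfac] at hLmem
  rcases mul_eq_zero.mp hLmem with h1 | h1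
  · linarith [sub_eq_zero.mp h1]
  · have : L = (T - s) / 2 := by linarith [sub_eq_zero.mp h1]
    linarith

-- helper: sqrt (a^2 + k) > -a and > a for k > 0
lemma sqrt_gt (a k : ℝ) (hk : 0 < k) : |a| < Real.sqrt (a ^ 2 + k) := by
  rw [← Real.sqrt_sq_eq_abs]
  exact Real.sqrt_lt_sqrt (sq_nonneg a) (by linarith)

/-- Sign of the largest eigenvalue λ_A of A = [[r_u - μ_u, μ_v], [μ_u, r_v - μ_v]]
according to the signs of r_u, r_v, and monotonicity of λ_A in r_u and r_v. -/
theorem stmt2 (μ_u μ_v : ℝ) (hμu : 0 < μ_u) (hμv : 0 < μ_v)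
    (lamA : ℝ → ℝ → ℝ)
    (hlam : ∀ r_u r_v : ℝ, IsGreatest
      {x : ℝ | x ^ 2 - ((r_u - μ_u) + (r_v - μ_v)) * x +
        ((r_u - μ_u) * (r_v - μ_v) - μ_v * μ_u) = 0} (lamA r_u r_v)) :
    (∀ r_u r_v : ℝ, 0 < r_u → 0 < r_v → 0 < lamA r_u r_v) ∧
    (∀ r_u r_v : ℝ, r_u < 0 → r_v < 0 → lamA r_u r_v < 0) ∧
    lamA 0 0 = 0 ∧
    (∀ r_v : ℝ, StrictMono fun r_u => lamA r_u r_v) ∧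
    (∀ r_u : ℝ, StrictMono fun r_v => lamA r_u r_v) := by
  have hfor : ∀ r_u r_v : ℝ, lamA r_u r_v = (((r_u - μ_u) + (r_v - μ_v)) +
      Real.sqrt (((r_u - μ_u) - (r_v - μ_v)) ^ 2 + 4 * μ_u * μ_v)) / 2 :=
    fun r_u r_v => lam_formula μ_u μ_v hμu hμv r_u r_v _ (hlam r_u r_v)
  have hk : 0 < 4 * μ_u * μ_v := by positivity
  have sq : ∀ a : ℝ, (Real.sqrt (a ^ 2 + 4 * μ_u * μ_v)) ^ 2 = a ^ 2 + 4 * μ_u * μ_v :=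
    fun a => Real.sq_sqrt (by positivity)
  have sgt : ∀ a : ℝ, |a| < Real.sqrt (a ^ 2 + 4 * μ_u * μ_v) := fun a => sqrt_gt a _ hk
  refine ⟨?_, ?_, ?_, ?_, ?_⟩
  · intro r_u r_v hru hrv
    rw [hfor]
    set a := (r_u - μ_u) - (r_v - μ_v) with ha
    have h1 := sq a
    have h2 := (abs_lt.mp (sgt a)).1
    have h3 := (abs_lt.mp (sgt a)).2
    set s := Real.sqrt (a ^ 2 + 4 * μ_u * μ_v) with hs
    -- λ ≥ min r_u r_v > 0
    rcases le_total r_u r_v with hc | hc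
    · -- show 2*r_u ≤ T + s : s^2 - (2r_u - T)^2 = 4 μ_u (r_v - r_u) ≥ 0
      nlinarith [sq_nonneg (s - (2 * r_u - ((r_u - μ_u) + (r_v - μ_v)))),
        mul_nonneg hμu.le (sub_nonneg.mpr hc)]
    · nlinarith [sq_nonneg (s - (2 * r_v - ((r_u - μ_u) + (r_v - μ_v)))),
        mul_nonneg hμv.le (sub_nonneg.mpr hc)]
  · intro r_u r_v hru hrv
    rw [hfor]
    set a := (r_u - μ_u) - (r_v - μ_v) with ha
    have h1 := sq a
    have h2 := (abs_lt.mp (sgt a)).1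
    have h3 := (abs_lt.mp (sgt a)).2
    set s := Real.sqrt (a ^ 2 + 4 * μ_u * μ_v) with hs
    have hs0 : 0 ≤ s := Real.sqrt_nonneg _
    -- need s < -(T) ; s^2 < T^2 since D > 0
    have hD : 0 < r_u * r_v - μ_v * r_u - μ_u * r_v := by nlinarith [mul_pos (neg_pos.mpr hru) (neg_pos.mpr hrv), mul_pos hμv (neg_pos.mpr hru), mul_pos hμu (neg_pos.mpr hrv)]
    nlinarith [sq_nonneg (s + ((r_u - μ_u) + (r_v - μ_v)))]
  · rw [hfor]
    have : ((0:ℝ) - μ_u - (0 - μ_v)) ^ 2 + 4 * μ_u * μ_v = (μ_u + μ_v) ^ 2 := by ring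
    rw [this, Real.sqrt_sq (by linarith)]
    ring
  · intro r_v x y hxy
    simp only
    rw [hfor, hfor]
    set a := (x - μ_u) - (r_v - μ_v) with ha
    set b := (y - μ_u) - (r_v - μ_v) with hb
    have hab : a < b := by simp [ha, hb]; linarith
    have h1 := sq a
    have h2 := sq b
    have h2a := (abs_lt.mp (sgt a)).1
    have h2b := (abs_lt.mp (sgt b)).1
    set sa := Real.sqrt (a ^ 2 + 4 * μ_u * μ_v) with hsa
    set sb := Real.sqrt (b ^ 2 + 4 * μ_u * μ_v) with hsb
    have hsum : 0 < sa + sb + a + b := by linarith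
    have hss : 0 < sa + sb := by linarith [abs_nonneg a, abs_nonneg b, sgt a, sgt b]
    -- (b + sb - a - sa)(sa + sb) = (b - a)(sa + sb + a + b)
    nlinarith [mul_pos (sub_pos.mpr hab) hsum]
  · intro r_u x y hxy
    simp only
    rw [hfor, hfor]
    set a := (r_u - μ_u) - (x - μ_v) with ha
    set b := (r_u - μ_u) - (y - μ_v) with hb
    have hab : b < a := by simp [ha, hb]; linarith
    have h1 := sq a
    have h2 := sq b
    have h2a := (abs_lt.mp (sgt a)).2
    have h2b := (abs_lt.mp (sgt b)).2
    set sa := Real.sqrt (a ^ 2 + 4 * μ_u * μ_v) with hsa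
    set sb := Real.sqrt (b ^ 2 + 4 * μ_u * μ_v) with hsb
    -- goal: (r_u-μ_u + x-μ_v + sa)/2 < (r_u-μ_u + y-μ_v + sb)/2, i.e. sa - sb < y - x = a - b
    -- i.e. sa + (-a) < sb + (-b) with -a < -b ; use -a + sa vs: sa - sb < a - b ⇔ sa - a < sb - b
    -- h2a : a < sa ; (sa - sb)(sa + sb) = a² - b²
    have hsum : 0 < sa + sb - a - b := by linarith
    have hss : 0 < sa + sb := by linarith [abs_nonneg a, abs_nonneg b, sgt a, sgt b]
    nlinarith [mul_pos (sub_pos.mpr hab) hsum]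
end

section
/- Let r_u, r_v ∈ ℝ, κ_u, κ_v > 0, μ_u, μ_v > 0, and suppose λ_A > 0 where λ_A is the largest eigenvalue of A = [[r_u - μ_u, μ_v], [μ_u, r_v - μ_v]]. Then there exists a unique pair (u*, v*) with u* > 0 and v* > 0 satisfying (r_u - κ_u(u* + v*))u* + μ_v v* - μ_u u* = 0 and (r_v - κ_v(u* + v*))v* + μ_u u* - μ_v v* = 0. Moreover, every nonnegative nontrivial equilibrium of this system is equal to (u*, v*). -/
set_option maxHeartbeats 1000000 in
/-- If λ_A > 0 then the ODE system has a unique positive equilibrium (u*, v*),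
and every nonnegative nontrivial equilibrium coincides with it. -/
theorem stmt3 (r_u r_v κ_u κ_v μ_u μ_v lamA : ℝ)
    (hκu : 0 < κ_u) (hκv : 0 < κ_v) (hμu : 0 < μ_u) (hμv : 0 < μ_v)
    (hlam : IsGreatest {x : ℝ | x ^ 2 - ((r_u - μ_u) + (r_v - μ_v)) * x +
      ((r_u - μ_u) * (r_v - μ_v) - μ_v * μ_u) = 0} lamA)
    (hpos : 0 < lamA) :
    ∃ u v : ℝ, 0 < u ∧ 0 < v ∧
      (r_u - κ_u * (u + v)) * u + μ_v * v - μ_u * u = 0 ∧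
      (r_v - κ_v * (u + v)) * v + μ_u * u - μ_v * v = 0 ∧
      ∀ u' v' : ℝ, 0 ≤ u' → 0 ≤ v' → (u', v') ≠ (0, 0) →
        (r_u - κ_u * (u' + v')) * u' + μ_v * v' - μ_u * u' = 0 →
        (r_v - κ_v * (u' + v')) * v' + μ_u * u' - μ_v * v' = 0 →
        u' = u ∧ v' = v := by
  have hroot : lamA ^ 2 - ((r_u - μ_u) + (r_v - μ_v)) * lamA +
      ((r_u - μ_u) * (r_v - μ_v) - μ_v * μ_u) = 0 := hlam.1
  clear hlam
  obtain ⟨D, hDsq, hDpos⟩ : ∃ D : ℝ,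
      D ^ 2 = (κ_u * (r_v - μ_v) - κ_v * (r_u - μ_u)) ^ 2 + 4 * κ_u * κ_v * μ_u * μ_v ∧
      0 < D :=
    ⟨_, Real.sq_sqrt (by positivity), Real.sqrt_pos.mpr (by positivity)⟩
  obtain ⟨s, hseq⟩ : ∃ s : ℝ,
      2 * κ_u * κ_v * s = κ_u * (r_v - μ_v) + κ_v * (r_u - μ_u) + D :=
    ⟨(κ_u * (r_v - μ_v) + κ_v * (r_u - μ_u) + D) / (2 * κ_u * κ_v), by field_simp⟩
  have hk : (0:ℝ) < 2 * κ_u * κ_v := by positivity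
  have hP : 0 < 4 * κ_u * κ_v * μ_u * μ_v := by positivity
  have h1 : 0 < D + (κ_u * (r_v - μ_v) - κ_v * (r_u - μ_u)) := by nlinarith [hDsq, hDpos, hP]
  have h2 : 0 < D - (κ_u * (r_v - μ_v) - κ_v * (r_u - μ_u)) := by nlinarith [hDsq, hDpos, hP]
  have hFa : 0 < κ_u * s - (r_u - μ_u) := by
    have e : 2 * κ_u * κ_v * (κ_u * s - (r_u - μ_u)) =
        κ_u * (D + (κ_u * (r_v - μ_v) - κ_v * (r_u - μ_u))) := by
      linear_combination κ_u * hseq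
    nlinarith [mul_pos hκu h1, hk, e]
  have hFd : 0 < κ_v * s - (r_v - μ_v) := by
    have e : 2 * κ_u * κ_v * (κ_v * s - (r_v - μ_v)) =
        κ_v * (D - (κ_u * (r_v - μ_v) - κ_v * (r_u - μ_u))) := by
      linear_combination κ_v * hseq
    nlinarith [mul_pos hκv h2, hk, e]
  have hFbig : (2 * κ_u * κ_v) ^ 2 * ((κ_u * s - (r_u - μ_u)) * (κ_v * s - (r_v - μ_v))) =
      (2 * κ_u * κ_v) ^ 2 * (μ_u * μ_v) := by
    linear_combination ((2 * κ_u * κ_v) ^ 2 * s / 2 +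
        (2 * κ_u * κ_v) * (D - (κ_u * (r_v - μ_v) + κ_v * (r_u - μ_u))) / 2) * hseq +
      ((2 * κ_u * κ_v) / 2) * hDsq
  have hF : (κ_u * s - (r_u - μ_u)) * (κ_v * s - (r_v - μ_v)) = μ_u * μ_v :=
    mul_left_cancel₀ (by positivity) hFbig
  have hspos : 0 < s := by
    by_contra h
    push_neg at h
    have hku : κ_u * s ≤ 0 := mul_nonpos_of_nonneg_of_nonpos hκu.le h
    have hkv : κ_v * s ≤ 0 := mul_nonpos_of_nonneg_of_nonpos hκv.le h
    have ha0 : r_u - μ_u < 0 := by linarith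
    have hd0 : r_v - μ_v < 0 := by linarith
    have k1 : κ_u * s - (r_u - μ_u) ≤ -(r_u - μ_u) := by linarith
    have k2 : κ_v * s - (r_v - μ_v) ≤ -(r_v - μ_v) := by linarith
    have had : μ_u * μ_v ≤ (r_u - μ_u) * (r_v - μ_v) := by
      have := mul_le_mul k1 k2 hFd.le (by linarith)
      linarith [this, hF]
    nlinarith [hroot, hpos, mul_pos hpos hpos, mul_pos (neg_pos.mpr ha0) hpos,
      mul_pos (neg_pos.mpr hd0) hpos]
  have hW : 0 < μ_v + (κ_u * s - (r_u - μ_u)) := add_pos hμv hFa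
  obtain ⟨u, hueq⟩ : ∃ u : ℝ, u * (μ_v + (κ_u * s - (r_u - μ_u))) = s * μ_v :=
    ⟨s * μ_v / (μ_v + (κ_u * s - (r_u - μ_u))), div_mul_cancel₀ _ (ne_of_gt hW)⟩
  have hupos : 0 < u := by nlinarith [hueq, mul_pos hspos hμv, hW]
  have hveq : (s - u) * (μ_v + (κ_u * s - (r_u - μ_u))) = s * (κ_u * s - (r_u - μ_u)) := by
    linear_combination -hueq
  have hvpos : 0 < s - u := by nlinarith [hveq, mul_pos hspos hFa, hW]
  refine ⟨u, s - u, hupos, hvpos, ?_, ?_, ?_⟩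
  · linear_combination -hueq
  · -- second equation, multiplied by W
    have hbig : (μ_v + (κ_u * s - (r_u - μ_u))) *
        ((r_v - κ_v * (u + (s - u))) * (s - u) + μ_u * u - μ_v * (s - u)) = 0 := by
      linear_combination ((r_v - μ_v) - κ_v * s) * hveq + μ_u * hueq + (-s) * hF
    rcases mul_eq_zero.mp hbig with h | h
    · exact absurd h (ne_of_gt hW)
    · exact h
  · intro u' v' hu' hv' hne e1 e2
    have hu'pos : 0 < u' := by
      rcases hu'.lt_or_eq with h | h
      · exact h
      · exfalso
        rw [← h] at e1
        have hv0 : v' = 0 := by nlinarith [e1]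
        exact hne (by rw [← h, hv0])
    have hv'pos : 0 < v' := by
      rcases hv'.lt_or_eq with h | h
      · exact h
      · exfalso
        rw [← h] at e2
        have hu0 : u' = 0 := by nlinarith [e2]
        exact hne (by rw [← h, hu0])
    have e1' : μ_v * v' = (κ_u * (u' + v') - (r_u - μ_u)) * u' := by linear_combination e1
    have e2' : μ_u * u' = (κ_v * (u' + v') - (r_v - μ_v)) * v' := by linear_combination e2
    have hFa' : 0 < κ_u * (u' + v') - (r_u - μ_u) := by
      nlinarith [mul_pos hμv hv'pos, e1', hu'pos]
    have hFd' : 0 < κ_v * (u' + v') - (r_v - μ_v) := by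
      nlinarith [mul_pos hμu hu'pos, e2', hv'pos]
    have hprod : (κ_u * (u' + v') - (r_u - μ_u)) * (κ_v * (u' + v') - (r_v - μ_v)) * (u' * v') =
        μ_u * μ_v * (u' * v') := by
      linear_combination (-(κ_v * (u' + v') - (r_v - μ_v)) * v') * e1' + (-μ_v * v') * e2'
    have hF' : (κ_u * (u' + v') - (r_u - μ_u)) * (κ_v * (u' + v') - (r_v - μ_v)) = μ_u * μ_v :=
      mul_right_cancel₀ (ne_of_gt (mul_pos hu'pos hv'pos)) hprod
    have key : ((u' + v') - s) *
        (κ_u * (κ_v * (u' + v') - (r_v - μ_v)) + κ_v * (κ_u * s - (r_u - μ_u))) = 0 := by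
      linear_combination hF' - hF
    have hfac : 0 < κ_u * (κ_v * (u' + v') - (r_v - μ_v)) + κ_v * (κ_u * s - (r_u - μ_u)) :=
      add_pos (mul_pos hκu hFd') (mul_pos hκv hFa)
    have hseqv : u' + v' = s := by
      rcases mul_eq_zero.mp key with h | h
      · linarith [sub_eq_zero.mp h]
      · exact absurd h (ne_of_gt hfac)
    have hu'W : u' * (μ_v + (κ_u * s - (r_u - μ_u))) = s * μ_v := by
      linear_combination -e1' + (μ_v - κ_u * u') * hseqv
    have huu : u' = u := by
      have hz : (u' - u) * (μ_v + (κ_u * s - (r_u - μ_u))) = 0 := by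
        linear_combination hu'W - hueq
      rcases mul_eq_zero.mp hz with h | h
      · linarith [sub_eq_zero.mp h]
      · exact absurd h (ne_of_gt hW)
    refine ⟨huu, ?_⟩
    rw [huu] at hseqv
    linarith
end

section
/- Let (u*, v*) be a positive equilibrium of the ODE system, i.e., u*, v* > 0 satisfy (r_u - κ_u(u*+v*))u* + μ_v v* - μ_u u* = 0 and (r_v - κ_v(u*+v*))v* + μ_u u* - μ_v v* = 0, with κ_u, κ_v, μ_u, μ_v > 0. If r_u - μ_u > μ_v then μ_v/κ_u < u* < (r_u - μ_u)/κ_u; if 0 < r_u - μ_u < μ_v then (r_u - μ_u)/κ_u < u* < μ_v/κ_u; and if r_u - μ_u = μ_v then u* = μ_v/κ_u. -/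
/-- Bounds on the u-component of a positive equilibrium in terms of the sign
relations between r_u - μ_u and μ_v. -/
theorem stmt5 (r_u r_v κ_u κ_v μ_u μ_v u v : ℝ)
    (hκu : 0 < κ_u) (hκv : 0 < κ_v) (hμu : 0 < μ_u) (hμv : 0 < μ_v)
    (hu : 0 < u) (hv : 0 < v)
    (e1 : (r_u - κ_u * (u + v)) * u + μ_v * v - μ_u * u = 0)
    (e2 : (r_v - κ_v * (u + v)) * v + μ_u * u - μ_v * v = 0) :
    (μ_v < r_u - μ_u → μ_v / κ_u < u ∧ u < (r_u - μ_u) / κ_u) ∧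
    (0 < r_u - μ_u → r_u - μ_u < μ_v → (r_u - μ_u) / κ_u < u ∧ u < μ_v / κ_u) ∧
    (r_u - μ_u = μ_v → u = μ_v / κ_u) := by
  have key : u * (r_u - μ_u - κ_u * u) = v * (κ_u * u - μ_v) := by nlinarith [e1]
  refine ⟨fun h => ⟨?_, ?_⟩, fun h1 h2 => ⟨?_, ?_⟩, fun h => ?_⟩
  · rw [div_lt_iff₀ hκu]; nlinarith
  · rw [lt_div_iff₀ hκu]; nlinarith
  · rw [div_lt_iff₀ hκu]; nlinarith
  · rw [lt_div_iff₀ hκu]; nlinarith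
  · rw [eq_div_iff hκu.ne']; nlinarith [sq_nonneg (u * κ_u - μ_v), mul_pos hu hv]
end

section
/- Let (u*, v*) be a positive equilibrium of the ODE system as above with κ_u, κ_v, μ_u, μ_v > 0. If r_u - μ_u ≤ 0 then 0 < u* < μ_v/κ_u. Consequently, if in addition r_v - μ_v ≤ 0 then also 0 < v* < μ_u/κ_v, so (u*, v*) lies in the interior of the cooperative zone {(u,v) : κ_u u ≤ μ_v, κ_v v ≤ μ_u}. -/
/-- If r_u - μ_u ≤ 0 then 0 < u* < μ_v/κ_u; if moreover r_v - μ_v ≤ 0 then also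
0 < v* < μ_u/κ_v, so (u*, v*) lies in the interior of the cooperative zone. -/
theorem stmt6 (r_u r_v κ_u κ_v μ_u μ_v u v : ℝ)
    (hκu : 0 < κ_u) (hκv : 0 < κ_v) (hμu : 0 < μ_u) (hμv : 0 < μ_v)
    (hu : 0 < u) (hv : 0 < v)
    (e1 : (r_u - κ_u * (u + v)) * u + μ_v * v - μ_u * u = 0)
    (e2 : (r_v - κ_v * (u + v)) * v + μ_u * u - μ_v * v = 0) :
    (r_u - μ_u ≤ 0 → 0 < u ∧ u < μ_v / κ_u) ∧
    (r_u - μ_u ≤ 0 → r_v - μ_v ≤ 0 →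
      (0 < v ∧ v < μ_u / κ_v) ∧ κ_u * u < μ_v ∧ κ_v * v < μ_u) := by
  have key1 : r_u - μ_u ≤ 0 → κ_u * u < μ_v := by
    intro h
    have hvv : 0 < v := hv
    nlinarith [mul_pos hu hv, mul_pos hκu (mul_pos hu hu), mul_nonneg (neg_nonneg.mpr h) hu.le]
  have key2 : r_v - μ_v ≤ 0 → κ_v * v < μ_u := by
    intro h
    nlinarith [mul_pos hu hv, mul_pos hκv (mul_pos hv hv), mul_nonneg (neg_nonneg.mpr h) hv.le]
  refine ⟨fun h => ⟨hu, ?_⟩, fun h1 h2 => ⟨⟨hv, ?_⟩, key1 h1, key2 h2⟩⟩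
  · rw [lt_div_iff₀ hκu]; have := key1 h; linarith [mul_comm κ_u u]
  · rw [lt_div_iff₀ hκv]; have := key2 h2; linarith [mul_comm κ_v v]
end

section
/- Let A, B, C, D be real numbers with A > 0, D > 0 and BC < AD. Then there exists K > 0 such that the quadratic form Q(U, V) = A U^2 + (B + K C) U V + K D V^2 is positive definite on ℝ^2, i.e., Q(U,V) > 0 for all (U,V) ≠ (0,0). -/
theorem binary_quadratic_pos_of_sq_lt {a b c : ℝ} (ha : 0 < a) (hdisc : b ^ 2 < 4 * a * c)
    {U V : ℝ} (hUV : (U, V) ≠ (0, 0)) : 0 < a * U ^ 2 + b * U * V + c * V ^ 2 := by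
  have hsquare : 4 * a * (a * U ^ 2 + b * U * V + c * V ^ 2) =
      (2 * a * U + b * V) ^ 2 + (4 * a * c - b ^ 2) * V ^ 2 := by ring
  suffices 0 < 4 * a * (a * U ^ 2 + b * U * V + c * V ^ 2) from
    pos_of_mul_pos_right this (by positivity)
  rw [hsquare]
  rcases eq_or_ne V 0 with rfl | hV
  · have hU : U ≠ 0 := fun hU => hUV (by rw [hU])
    have : 0 < (2 * a * U) ^ 2 := by positivity
    simpa using this
  · have : 0 < (4 * a * c - b ^ 2) * V ^ 2 := mul_pos (by linarith) (by positivity)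
    positivity

theorem exists_pos_quadratic_neg {a b c : ℝ} (ha : 0 ≤ a) (hb : b < 0) (hdisc : 4 * a * c < b ^ 2) :
    ∃ t, 0 < t ∧ a * t ^ 2 + b * t + c < 0 := by
  have hb' : 0 < -b := neg_pos.mpr hb
  rcases ha.eq_or_lt with rfl | ha
  · refine ⟨(|c| + 1) / -b, by positivity, ?_⟩
    have : b * ((|c| + 1) / -b) = -(|c| + 1) := by
      rw [div_neg, mul_neg, mul_div_cancel₀ _ hb.ne]
    rw [this]
    linarith [le_abs_self c]
  · refine ⟨-b / (2 * a), by positivity, ?_⟩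
    have : a * (-b / (2 * a)) ^ 2 + b * (-b / (2 * a)) + c = (4 * a * c - b ^ 2) / (4 * a) := by
      field_simp
      ring
    rw [this]
    exact div_neg_of_neg_of_pos (by linarith) (by positivity)

/-- If A > 0, D > 0 and BC < AD, there exists K > 0 making the quadratic form
Q(U,V) = A U² + (B + K C) U V + K D V² positive definite. -/
theorem stmt8 (A B C D : ℝ) (hA : 0 < A) (hD : 0 < D) (hBC : B * C < A * D) :
    ∃ K : ℝ, 0 < K ∧ ∀ U V : ℝ, (U, V) ≠ (0, 0) →
      0 < A * U ^ 2 + (B + K * C) * U * V + K * D * V ^ 2 := by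
  -- `C² K² + (2 B C - 4 A D) K + B² = (B + K C)² - 4 A D K`; its discriminant is
  -- `16 A D (A D - B C) > 0`.
  obtain ⟨K, hK, hneg⟩ := exists_pos_quadratic_neg (a := C ^ 2) (b := 2 * B * C - 4 * A * D)
    (c := B ^ 2) (sq_nonneg C) (by nlinarith) (by nlinarith [mul_pos hA hD])
  refine ⟨K, hK, fun U V hUV => binary_quadratic_pos_of_sq_lt hA ?_ hUV⟩
  linarith
end

section
/- Let u(t), v(t) be a positive solution of the ODE system u' = (r_u - κ_u(u+v))u + μ_v v - μ_u u, v' = (r_v - κ_v(u+v))v + μ_u u - μ_v v, and let (u*, v*) be a positive equilibrium. Then d/dt F_u(u(t)) ≤ -κ_u (u - u*)^2 - (κ_u - μ_v/u*)(u - u*)(v - v*), where F_u(u) = u - u* - u* log(u/u*), and the inequality is strict unless u = u*. -/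
/-!
Along a solution, `d/dt F_u(u) = (u - u*) u'/u`, and the per-capita growth rate is
`u'/u = r_u - μ_u - κ_u (u + v) + μ_v v/u`. Subtracting the equilibrium relation
`r_u - μ_u - κ_u (u* + v*) = -μ_v v*/u*` turns the derivative into the claimed quadratic
form minus the gap `μ_v v (u - u*)² / (u u*)`, which is nonnegative and vanishes only at
`u = u*`.
-/

open Real

noncomputable def volterraFn (c x : ℝ) : ℝ := x - c - c * log (x / c)

theorem HasDerivAt.volterraFn {f : ℝ → ℝ} {f' t c : ℝ} (hf : HasDerivAt f f' t)
    (hft : f t ≠ 0) (hc : c ≠ 0) :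
    HasDerivAt (fun s => volterraFn c (f s)) ((f t - c) * f' / f t) t := by
  have hlog := (hf.div_const c).log (div_ne_zero hft hc)
  refine ((hf.sub_const c).sub (hlog.const_mul c)).congr_deriv ?_
  field_simp

theorem volterra_derivative_eq_sub_gap {r_u κ_u μ_u μ_v ustar vstar U V : ℝ}
    (hust : ustar ≠ 0) (hU : U ≠ 0)
    (e1 : (r_u - κ_u * (ustar + vstar)) * ustar + μ_v * vstar - μ_u * ustar = 0) :
    (U - ustar) * ((r_u - κ_u * (U + V)) * U + μ_v * V - μ_u * U) / U =
      -κ_u * (U - ustar) ^ 2 - (κ_u - μ_v / ustar) * (U - ustar) * (V - vstar)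
        - μ_v * V * (U - ustar) ^ 2 / (U * ustar) := by
  field_simp
  linear_combination (U - ustar) * U * e1

theorem stmt11_general (r_u κ_u μ_u μ_v ustar vstar : ℝ)
    (hμv : 0 < μ_v)
    (hust : 0 < ustar)
    (e1 : (r_u - κ_u * (ustar + vstar)) * ustar + μ_v * vstar - μ_u * ustar = 0)
    (u v : ℝ → ℝ) (hupos : ∀ t, 0 < u t) (hvpos : ∀ t, 0 < v t)
    (hu : ∀ t, HasDerivAt u
      ((r_u - κ_u * (u t + v t)) * u t + μ_v * v t - μ_u * u t) t) :
    ∀ t : ℝ,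
      deriv (fun s => u s - ustar - ustar * Real.log (u s / ustar)) t ≤
        -κ_u * (u t - ustar) ^ 2 -
          (κ_u - μ_v / ustar) * (u t - ustar) * (v t - vstar) ∧
      (u t ≠ ustar →
        deriv (fun s => u s - ustar - ustar * Real.log (u s / ustar)) t <
          -κ_u * (u t - ustar) ^ 2 -
            (κ_u - μ_v / ustar) * (u t - ustar) * (v t - vstar)) := by
  intro t
  have hU := hupos t
  have hV := hvpos t
  have hderiv := ((hu t).volterraFn hU.ne' hust.ne').deriv
  rw [volterra_derivative_eq_sub_gap hust.ne' hU.ne' e1] at hderiv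
  change deriv (fun s => volterraFn ustar (u s)) t ≤ _ ∧
    (_ → deriv (fun s => volterraFn ustar (u s)) t < _)
  rw [hderiv]
  refine ⟨sub_le_self _ (by positivity), fun hne => sub_lt_self _ ?_⟩
  have : 0 < (u t - ustar) ^ 2 := by positivity [sub_ne_zero.mpr hne]
  positivity

/-- Along positive solutions of the ODE system, the Lyapunov component
F_u(u(t)) decreases: its derivative is bounded by the stated quadratic
expression, strictly unless u(t) = u*. -/
theorem stmt11 (r_u r_v κ_u κ_v μ_u μ_v ustar vstar : ℝ)
    (hκu : 0 < κ_u) (hκv : 0 < κ_v) (hμu : 0 < μ_u) (hμv : 0 < μ_v)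
    (hust : 0 < ustar) (hvst : 0 < vstar)
    (e1 : (r_u - κ_u * (ustar + vstar)) * ustar + μ_v * vstar - μ_u * ustar = 0)
    (e2 : (r_v - κ_v * (ustar + vstar)) * vstar + μ_u * ustar - μ_v * vstar = 0)
    (u v : ℝ → ℝ) (hupos : ∀ t, 0 < u t) (hvpos : ∀ t, 0 < v t)
    (hu : ∀ t, HasDerivAt u
      ((r_u - κ_u * (u t + v t)) * u t + μ_v * v t - μ_u * u t) t)
    (hv : ∀ t, HasDerivAt v
      ((r_v - κ_v * (u t + v t)) * v t + μ_u * u t - μ_v * v t) t) :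
    ∀ t : ℝ,
      deriv (fun s => u s - ustar - ustar * Real.log (u s / ustar)) t ≤
        -κ_u * (u t - ustar) ^ 2 -
          (κ_u - μ_v / ustar) * (u t - ustar) * (v t - vstar) ∧
      (u t ≠ ustar →
        deriv (fun s => u s - ustar - ustar * Real.log (u s / ustar)) t <
          -κ_u * (u t - ustar) ^ 2 -
            (κ_u - μ_v / ustar) * (u t - ustar) * (v t - vstar)) :=
  stmt11_general r_u κ_u μ_u μ_v ustar vstar hμv hust e1 u v hupos hvpos hu
end

section
/- Let k_n : ℝ → ℝ be a sequence of convex functions converging pointwise to a convex function k_0 satisfying k_0(λ) > 0 for all λ ∈ ℝ, and suppose there exist σ_min > 0 and r_min ∈ ℝ with k_n(λ) ≥ σ_min λ^2 + r_min for all n and λ. Then: (i) for n large, min_λ k_n(λ) > 0; (ii) inf_{λ>0} k_n(λ)/λ → inf_{λ>0} k_0(λ)/λ as n → ∞. -/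
open Filter Set

lemma mySlopeMono {f : ℝ → ℝ} (hf : ConvexOn ℝ Set.univ f)
    {x1 y1 x2 y2 : ℝ} (h1 : x1 < y1) (h2 : x2 < y2) (hx : x1 ≤ x2) (hy : y1 ≤ y2) :
    (f y1 - f x1) / (y1 - x1) ≤ (f y2 - f x2) / (y2 - x2) := by
  have hx1y2 : x1 < y2 := lt_of_lt_of_le h1 hy
  have A : (f y1 - f x1) / (y1 - x1) ≤ (f y2 - f x1) / (y2 - x1) :=
    hf.secant_mono trivial trivial trivial (ne_of_gt h1) (ne_of_gt hx1y2) hy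
  have B : (f x1 - f y2) / (x1 - y2) ≤ (f x2 - f y2) / (x2 - y2) :=
    hf.secant_mono trivial trivial trivial (ne_of_lt hx1y2) (ne_of_lt h2) hx
  have e1 : (f x1 - f y2) / (x1 - y2) = (f y2 - f x1) / (y2 - x1) := by
    rw [← neg_sub (f y2), ← neg_sub y2, neg_div_neg_eq]
  have e2 : (f x2 - f y2) / (x2 - y2) = (f y2 - f x2) / (y2 - x2) := by
    rw [← neg_sub (f y2), ← neg_sub y2, neg_div_neg_eq]
  rw [e1, e2] at B
  exact A.trans B

/-- chord lower bound: `f x ≥ f q + (f q - f (q-1)) * (x - q)` for `q ≤ x`. -/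
lemma myChordLB {f : ℝ → ℝ} (hf : ConvexOn ℝ Set.univ f)
    {q x : ℝ} (hqx : q ≤ x) :
    f q + (f q - f (q - 1)) * (x - q) ≤ f x := by
  rcases eq_or_lt_of_le hqx with rfl | hqx
  · simp
  · have h := mySlopeMono hf (by linarith : q - 1 < q) hqx (by linarith) hqx.le
    have h1 : (f q - f (q - 1)) / (q - (q - 1)) = f q - f (q - 1) := by norm_num
    rw [h1] at h
    have hx : 0 < x - q := by linarith
    rw [le_div_iff₀ hx] at h
    linarith

/-- Lipschitz-type bound on an interval. -/
lemma myLipOn {f : ℝ → ℝ} (hf : ConvexOn ℝ Set.univ f) (a b : ℝ) :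
    ∃ C : ℝ, 0 ≤ C ∧ ∀ x y : ℝ, a ≤ x → x ≤ y → y ≤ b → |f y - f x| ≤ C * (y - x) := by
  refine ⟨max |f (a - 1) - f (a - 2)| |f (b + 2) - f (b + 1)|,
    le_trans (abs_nonneg _) (le_max_left _ _), ?_⟩
  intro x y hax hxy hyb
  rcases eq_or_lt_of_le hxy with rfl | hxy
  · simp
  · have hlo : (f (a - 1) - f (a - 2)) / ((a - 1) - (a - 2)) ≤ (f y - f x) / (y - x) :=
      mySlopeMono hf (by linarith) hxy (by linarith) (by linarith)
    have hhi : (f y - f x) / (y - x) ≤ (f (b + 2) - f (b + 1)) / ((b + 2) - (b + 1)) :=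
      mySlopeMono hf hxy (by linarith) (by linarith) (by linarith)
    have e1 : (f (a - 1) - f (a - 2)) / ((a - 1) - (a - 2)) = f (a - 1) - f (a - 2) := by
      norm_num
    have e2 : (f (b + 2) - f (b + 1)) / ((b + 2) - (b + 1)) = f (b + 2) - f (b + 1) := by
      norm_num
    rw [e1] at hlo; rw [e2] at hhi
    have hyx : 0 < y - x := by linarith
    have habs : |(f y - f x) / (y - x)| ≤ max |f (a - 1) - f (a - 2)| |f (b + 2) - f (b + 1)| := by
      rw [abs_le]
      constructor
      · have := neg_abs_le (f (a - 1) - f (a - 2))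
        have h2 : -(max |f (a - 1) - f (a - 2)| |f (b + 2) - f (b + 1)|) ≤
            -|f (a - 1) - f (a - 2)| := neg_le_neg (le_max_left _ _)
        linarith
      · have := le_abs_self (f (b + 2) - f (b + 1))
        have h2 := le_max_right |f (a - 1) - f (a - 2)| |f (b + 2) - f (b + 1)|
        linarith
    have : |f y - f x| = |(f y - f x) / (y - x)| * (y - x) := by
      rw [abs_div, abs_of_pos hyx]; field_simp
    rw [this]
    exact mul_le_mul_of_nonneg_right habs hyx.le

/-- Pointwise convergence of convex functions gives an eventual uniform lower bound
on compact intervals. -/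
lemma myUnifLB {k : ℕ → ℝ → ℝ} {k0 : ℝ → ℝ}
    (hconv : ∀ n, ConvexOn ℝ Set.univ (k n)) (hconv0 : ConvexOn ℝ Set.univ k0)
    (hptw : ∀ lam : ℝ, Filter.Tendsto (fun n => k n lam) Filter.atTop (nhds (k0 lam)))
    (a b ε : ℝ) (hab : a < b) (hε : 0 < ε) :
    ∀ᶠ n in Filter.atTop, ∀ x ∈ Set.Icc a b, k0 x - ε ≤ k n x := by
  obtain ⟨C, hC0, hC⟩ := myLipOn hconv0 (a - 1) (b + 1)
  set h : ℝ := min 1 (ε / (3 * C + 3 * ε + 3)) with hh_def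
  have hden : 0 < 3 * C + 3 * ε + 3 := by linarith
  have hh : 0 < h := lt_min one_pos (by positivity)
  have hh1 : h ≤ 1 := min_le_left _ _
  have hh2 : h ≤ ε / (3 * C + 3 * ε + 3) := min_le_right _ _
  set m : ℕ := ⌊(b - a) / h⌋₊ with hm_def
  have Pev : ∀ t : ℝ, ∀ᶠ n in atTop, |k n t - k0 t| ≤ ε / 3 := by
    intro t
    have := Metric.tendsto_nhds.mp (hptw t) (ε / 3) (by positivity)
    filter_upwards [this] with n hn
    rw [Real.dist_eq] at hn
    exact hn.le
  have Big : ∀ᶠ n in atTop, ∀ j ∈ Finset.range (m + 1),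
      |k n (a + j * h) - k0 (a + j * h)| ≤ ε / 3 ∧
      |k n (a + j * h - 1) - k0 (a + j * h - 1)| ≤ ε / 3 :=
    Filter.eventually_all_finset _ |>.mpr fun j _ => (Pev _).and (Pev _)
  filter_upwards [Big] with n hn x hx
  obtain ⟨hax, hxb⟩ := hx
  set j : ℕ := ⌊(x - a) / h⌋₊ with hj_def
  set q : ℝ := a + j * h with hq_def
  have hxa0 : 0 ≤ (x - a) / h := div_nonneg (by linarith) hh.le
  have hjm : j ≤ m := Nat.floor_mono ((div_le_div_iff_of_pos_right hh).mpr (by linarith))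
  have hqx : q ≤ x := by
    have := Nat.floor_le hxa0
    have := (le_div_iff₀ hh).mp this
    simp only [hq_def]
    linarith
  have hxqh : x < q + h := by
    have := Nat.lt_floor_add_one ((x - a) / h)
    rw [div_lt_iff₀ hh] at this
    simp only [hq_def]
    push_cast
    push_cast at this
    linarith
  have hmem : j ∈ Finset.range (m + 1) := Finset.mem_range.mpr (Nat.lt_succ_of_le hjm)
  obtain ⟨e1, e2⟩ := hn j hmem
  rw [← hq_def] at e1 e2
  -- bounds on k0 slopes
  have hqab : a ≤ q ∧ q ≤ b := by
    constructor
    · have : (0:ℝ) ≤ j * h := by positivity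
      simp only [hq_def]; linarith
    · exact hqx.trans hxb
  clear_value h m j q
  have hk0slope : |k0 q - k0 (q - 1)| ≤ C := by
    have := hC (q - 1) q (by linarith [hqab.1]) (by linarith) (by linarith [hqab.2])
    calc |k0 q - k0 (q - 1)| ≤ C * (q - (q - 1)) := this
      _ = C := by ring
  have hk0x : |k0 x - k0 q| ≤ C * h := by
    have := hC q x (by linarith [hqab.1]) hqx (by linarith)
    have h2 : C * (x - q) ≤ C * h := mul_le_mul_of_nonneg_left (by linarith) hC0
    linarith
  -- slope bound for k n
  obtain ⟨e1a, e1b⟩ := abs_le.mp e1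
  obtain ⟨e2a, e2b⟩ := abs_le.mp e2
  obtain ⟨sa, sb⟩ := abs_le.mp hk0slope
  obtain ⟨xa, xb⟩ := abs_le.mp hk0x
  have hs : |k n q - k n (q - 1)| ≤ C + 2 * ε / 3 := by
    rw [abs_le]; constructor <;> linarith
  -- chord lower bound
  have chord := myChordLB (hconv n) hqx
  have hxq0 : 0 ≤ x - q := by linarith
  have hxqh' : x - q ≤ h := by linarith
  have hF2 : -( (C + 2 * ε / 3) * h) ≤ (k n q - k n (q - 1)) * (x - q) := by
    have t1 : -|k n q - k n (q - 1)| * (x - q) ≤ (k n q - k n (q - 1)) * (x - q) :=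
      mul_le_mul_of_nonneg_right (neg_abs_le _) hxq0
    have t2 : |k n q - k n (q - 1)| * (x - q) ≤ (C + 2 * ε / 3) * h :=
      mul_le_mul hs hxqh' hxq0 (by linarith)
    rw [neg_mul] at t1
    linarith
  -- smallness of h
  have keyA : (2 * C + 2 * ε / 3) * h ≤ 2 * ε / 3 := by
    have h1 : (2 * C + 2 * ε / 3) * h ≤ (2 * C + 2 * ε / 3) * (ε / (3 * C + 3 * ε + 3)) :=
      mul_le_mul_of_nonneg_left hh2 (by linarith)
    have h2 : (2 * C + 2 * ε / 3) * (ε / (3 * C + 3 * ε + 3)) ≤ 2 * ε / 3 := by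
      have e : (2 * C + 2 * ε / 3) * (ε / (3 * C + 3 * ε + 3))
          = ((2 * C + 2 * ε / 3) * ε) / (3 * C + 3 * ε + 3) := by ring
      rw [e, div_le_iff₀ hden]
      nlinarith [mul_nonneg hC0 hε.le, sq_nonneg ε]
    linarith
  linarith [chord, hF2, e1a, xb, keyA]





/-- Homogenization of spreading speeds: if convex functions k_n converge
pointwise to a positive convex k_0 and admit a uniform quadratic lower bound,
then for large n the minimum of k_n is positive, and the one-sided infima
inf_{λ>0} k_n(λ)/λ converge to inf_{λ>0} k_0(λ)/λ. -/
theorem stmt19 (k : ℕ → ℝ → ℝ) (k0 : ℝ → ℝ)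
    (hconv : ∀ n, ConvexOn ℝ Set.univ (k n)) (hconv0 : ConvexOn ℝ Set.univ k0)
    (hptw : ∀ lam : ℝ, Filter.Tendsto (fun n => k n lam) Filter.atTop (nhds (k0 lam)))
    (hpos : ∀ lam : ℝ, 0 < k0 lam)
    (σmin rmin : ℝ) (hσ : 0 < σmin)
    (hlb : ∀ n (lam : ℝ), σmin * lam ^ 2 + rmin ≤ k n lam) :
    (∃ N : ℕ, ∀ n ≥ N, ∃ δ > 0, ∀ lam : ℝ, δ ≤ k n lam) ∧
    Filter.Tendsto (fun n => sInf {y : ℝ | ∃ lam > 0, y = k n lam / lam})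
      Filter.atTop (nhds (sInf {y : ℝ | ∃ lam > 0, y = k0 lam / lam})) := by
  -- outer bound
  set M : ℝ := max 1 ((1 - rmin) / σmin) with hM_def
  have hM1 : (1:ℝ) ≤ M := le_max_left _ _
  have hMr : 1 - rmin ≤ σmin * M := by
    have := le_max_right 1 ((1 - rmin) / σmin)
    rw [div_le_iff₀ hσ] at this
    calc 1 - rmin ≤ M * σmin := this.trans (mul_le_mul_of_nonneg_right (le_refl M) hσ.le)
      _ = σmin * M := by ring
  have houter : ∀ n (lam : ℝ), M ≤ |lam| → 1 ≤ k n lam := by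
    intro n lam hl
    have h2 : M ^ 2 ≤ lam ^ 2 := by
      nlinarith [sq_abs lam, abs_nonneg lam]
    have h3 := hlb n lam
    have hM2 : M ≤ M ^ 2 := by nlinarith
    have h4 : σmin * M ≤ σmin * M ^ 2 := mul_le_mul_of_nonneg_left hM2 hσ.le
    have h5 : σmin * M ^ 2 ≤ σmin * lam ^ 2 := mul_le_mul_of_nonneg_left h2 hσ.le
    linarith
  -- minimum of k0 on [-M, M]
  have hcont : ContinuousOn k0 (Set.Icc (-M) M) :=
    (hconv0.continuousOn isOpen_univ).mono (Set.subset_univ _)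
  obtain ⟨x0, hx0mem, hx0⟩ := isCompact_Icc.exists_isMinOn
    ⟨0, by rw [Set.mem_Icc]; constructor <;> linarith⟩ hcont
  set c : ℝ := k0 x0 with hc_def
  have hc : 0 < c := hpos x0
  set δ0 : ℝ := min (c / 2) 1 with hδ0_def
  have hδ0 : 0 < δ0 := lt_min (by linarith) one_pos
  have hGev : ∀ᶠ n in Filter.atTop, ∀ lam : ℝ, δ0 ≤ k n lam := by
    filter_upwards [myUnifLB hconv hconv0 hptw (-M) M (c / 2) (by linarith) (by linarith)]
      with n hn
    intro lam
    rcases le_or_gt (|lam|) M with h1 | h1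
    · have hmem : lam ∈ Set.Icc (-M) M := by
        rw [Set.mem_Icc]
        constructor <;> [linarith [neg_abs_le lam]; linarith [le_abs_self lam]]
      have h2 := hn lam hmem
      have h3 : c ≤ k0 lam := isMinOn_iff.mp hx0 lam hmem
      have h4 : δ0 ≤ c / 2 := min_le_left _ _
      linarith
    · have := houter n lam h1.le
      have h4 : δ0 ≤ 1 := min_le_right _ _
      linarith
  obtain ⟨N1, hN1⟩ := Filter.eventually_atTop.mp hGev
  constructor
  · exact ⟨N1, fun n hn => ⟨δ0, hδ0, hN1 n hn⟩⟩
  -- part (ii)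
  set S0 : Set ℝ := {y : ℝ | ∃ lam > 0, y = k0 lam / lam} with hS0_def
  have hS0ne : S0.Nonempty := ⟨k0 1 / 1, 1, one_pos, rfl⟩
  have hS0bdd : BddBelow S0 := by
    refine ⟨0, fun y hy => ?_⟩
    obtain ⟨lam, hl, rfl⟩ := hy
    exact div_nonneg (hpos lam).le hl.le
  set I0 : ℝ := sInf S0 with hI0_def
  have hI0nonneg : 0 ≤ I0 := le_csInf hS0ne (by
    rintro y ⟨lam, hl, rfl⟩
    exact div_nonneg (hpos lam).le hl.le)
  have hI0le : ∀ lam : ℝ, 0 < lam → I0 ≤ k0 lam / lam := fun lam hl =>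
    csInf_le hS0bdd ⟨lam, hl, rfl⟩
  rw [Metric.tendsto_atTop]
  intro ε hε
  -- constants for the three regions
  set b : ℝ := max 2 ((I0 + 1 + |rmin|) / σmin) with hb_def
  have hb2 : (2:ℝ) ≤ b := le_max_left _ _
  have hbσ : I0 + 1 + |rmin| ≤ σmin * b := by
    have := le_max_right 2 ((I0 + 1 + |rmin|) / σmin)
    rw [div_le_iff₀ hσ] at this
    linarith [this]
  set a : ℝ := δ0 / (I0 + 1) with ha_def
  have ha0 : 0 < a := div_pos hδ0 (by linarith)
  have haδ : a ≤ δ0 := div_le_self hδ0.le (by linarith)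
  have hδ1 : δ0 ≤ 1 := min_le_right _ _
  have hab : a < b := by linarith
  have hδa : δ0 / a = I0 + 1 := by
    rw [ha_def, div_div_eq_mul_div, mul_comm, mul_div_assoc, div_self (ne_of_gt hδ0), mul_one]
  -- eventual uniform lower bound over all lam > 0
  have hLow : ∀ᶠ n in Filter.atTop, ∀ lam : ℝ, 0 < lam → I0 - ε / 2 ≤ k n lam / lam := by
    filter_upwards [myUnifLB hconv hconv0 hptw a b (ε / 2 * a) hab (by positivity), hGev]
      with n hn hG
    intro lam hl
    rcases lt_or_ge lam a with h1 | h1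
    · have h2 : δ0 / a ≤ k n lam / lam :=
        div_le_div₀ (le_trans hδ0.le (hG lam)) (hG lam) hl h1.le
      rw [hδa] at h2
      linarith
    rcases le_or_gt lam b with h2 | h2
    · have h3 := hn lam ⟨h1, h2⟩
      have h4 : I0 ≤ k0 lam / lam := hI0le lam hl
      have h5 : ε / 2 * a / lam ≤ ε / 2 := by
        rw [div_le_iff₀ hl]
        nlinarith
      have h6 : (k0 lam - ε / 2 * a) / lam ≤ k n lam / lam :=
        (div_le_div_iff_of_pos_right hl).mpr h3
      have h7 : (k0 lam - ε / 2 * a) / lam = k0 lam / lam - ε / 2 * a / lam := sub_div _ _ _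
      linarith
    · have hl' : 0 < lam := hl
      have h5 : (σmin * lam ^ 2 + rmin) / lam ≤ k n lam / lam :=
        (div_le_div_iff_of_pos_right hl').mpr (hlb n lam)
      have h6 : (σmin * lam ^ 2 + rmin) / lam = σmin * lam + rmin / lam := by
        field_simp
      have h7 : σmin * b ≤ σmin * lam := mul_le_mul_of_nonneg_left h2.le hσ.le
      have h8 : |rmin| / lam ≤ |rmin| / b :=
        div_le_div_of_nonneg_left (abs_nonneg _) (by linarith) h2.le
      have h9 : |rmin| / b ≤ |rmin| := div_le_self (abs_nonneg _) (by linarith)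
      have h10 : -(|rmin| / lam) ≤ rmin / lam := by
        rw [← neg_div]
        exact (div_le_div_iff_of_pos_right hl').mpr (neg_abs_le rmin)
      linarith
  -- eventual upper bound at a near-optimal point
  obtain ⟨y, hymem, hylt⟩ := exists_lt_of_csInf_lt hS0ne (show I0 < I0 + ε / 4 by linarith)
  obtain ⟨lam1, hlam1, hy⟩ := hymem
  have hupper : ∀ᶠ n in Filter.atTop, k n lam1 / lam1 < I0 + ε / 2 := by
    have ht : Filter.Tendsto (fun n => k n lam1 / lam1) Filter.atTop
        (nhds (k0 lam1 / lam1)) := (hptw lam1).div_const _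
    exact ht.eventually_lt_const (by rw [← hy]; linarith)
  obtain ⟨N, hN⟩ := Filter.eventually_atTop.mp (hLow.and hupper)
  refine ⟨N, fun n hn => ?_⟩
  obtain ⟨hlo, hup⟩ := hN n hn
  have hSnne : Set.Nonempty {y : ℝ | ∃ lam > 0, y = k n lam / lam} := ⟨k n 1 / 1, 1, one_pos, rfl⟩
  have hSnbdd : BddBelow {y : ℝ | ∃ lam > 0, y = k n lam / lam} := by
    refine ⟨I0 - ε / 2, fun y hy => ?_⟩
    obtain ⟨lam, hl, rfl⟩ := hy
    exact hlo lam hl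
  have hIle : sInf {y : ℝ | ∃ lam > 0, y = k n lam / lam} ≤ k n lam1 / lam1 :=
    csInf_le hSnbdd ⟨lam1, hlam1, rfl⟩
  have hIge : I0 - ε / 2 ≤ sInf {y : ℝ | ∃ lam > 0, y = k n lam / lam} :=
    le_csInf hSnne (by
      rintro y ⟨lam, hl, rfl⟩
      exact hlo lam hl)
  rw [Real.dist_eq, abs_lt]
  constructor <;> linarith
end
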